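/- (Hermite–Hadamard inclusion, second half.) Let m ∈ (0,1], D a harmonically m-convex set of positive reals, and F : D → (nonempty subsets of ℝ) a harmonically m-convex set-valued function. Let 0 < a < b with a ∈ D and b/m ∈ D (so that the closed interval [a,b] is contained in D). Then for every u ∈ F(a) and every v ∈ F(b/m), the point (u + m*v)/2 belongs to the Aumann integral set; that is, there exists a function f : ℝ → ℝ that is integrable on [a,b], satisfies f(x) ∈ F(x) for every x ∈ [a,b], and for which (a*b/(b-a)) * ∫_a^b f(x)/x² dx = (u + m*v)/2. -/

import Mathlib

open Pointwise

/-- A set `D` of reals is harmonically `m`-convex. -/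
def HarmMConvexSet (m : ℝ) (D : Set ℝ) : Prop :=
  ∀ x ∈ D, ∀ y ∈ D, ∀ t ∈ Set.Icc (0:ℝ) 1,
    m * x * y / (t * m * x + (1 - t) * y) ∈ D

/-- A set-valued function `F` on `D` is harmonically `m`-convex. -/
def SVHarmMConvex {Y : Type*} [AddCommGroup Y] [Module ℝ Y]
    (m : ℝ) (D : Set ℝ) (F : ℝ → Set Y) : Prop :=
  ∀ x ∈ D, ∀ y ∈ D, ∀ t ∈ Set.Icc (0:ℝ) 1,
    t • F y + (m * (1 - t)) • F x ⊆ F (m * x * y / (t * m * x + (1 - t) * y))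

/-!
Under `y = 1/x` harmonic convexity becomes ordinary convexity, and `ab/(b-a) · dx/x²` becomes the
uniform probability measure on `[1/b, 1/a]`. The selection is therefore the one that is affine in
`1/x`, running from `u ∈ F a` at `x = a` to `m v ∈ m F (b/m)` at `x = b`; every value lies in `F x`
by harmonic `m`-convexity, and its mean is the midpoint `(u + m v)/2`.
-/

open Set

theorem SVHarmMConvex.smul_add_smul_mem {Y : Type*} [AddCommGroup Y] [Module ℝ Y]
    {m : ℝ} {D : Set ℝ} {F : ℝ → Set Y} (hF : SVHarmMConvex m D F) {x y t : ℝ}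
    (hx : x ∈ D) (hy : y ∈ D) (ht : t ∈ Icc (0 : ℝ) 1) {u v : Y} (hu : u ∈ F y) (hv : v ∈ F x) :
    t • u + (m * (1 - t)) • v ∈ F (m * x * y / (t * m * x + (1 - t) * y)) :=
  hF x hx y hy t ht (add_mem_add (smul_mem_smul_set hu) (smul_mem_smul_set hv))

/-- The weight `t` with `1/x = t/a + (1 - t)/b`. -/
noncomputable def harmonicWeight (a b x : ℝ) : ℝ := (x⁻¹ - b⁻¹) / (a⁻¹ - b⁻¹)

theorem harmonicWeight_mem_Icc {a b x : ℝ} (ha : 0 < a) (hab : a < b) (hx : x ∈ Icc a b) :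
    harmonicWeight a b x ∈ Icc (0 : ℝ) 1 := by
  have hx0 : 0 < x := ha.trans_le hx.1
  have hba : b⁻¹ < a⁻¹ := inv_strictAnti₀ ha hab
  refine ⟨div_nonneg (sub_nonneg.2 (inv_anti₀ hx0 hx.2)) (sub_pos.2 hba).le, ?_⟩
  exact div_le_one_of_le₀ (sub_le_sub_right (inv_anti₀ ha hx.1) _) (sub_pos.2 hba).le

theorem harmonicWeight_harmonicMean {m a b x : ℝ} (hm : m ≠ 0) (ha : a ≠ 0) (hb : b ≠ 0)
    (hab : a ≠ b) (hx : x ≠ 0) :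
    m * (b / m) * a / (harmonicWeight a b x * m * (b / m) + (1 - harmonicWeight a b x) * a)
      = x := by
  have hba : b - a ≠ 0 := sub_ne_zero.2 hab.symm
  have hden : harmonicWeight a b x * m * (b / m) + (1 - harmonicWeight a b x) * a = a * b / x := by
    rw [harmonicWeight]
    field_simp
    ring
  rw [hden]
  field_simp

theorem integral_comp_inv_div_sq {g : ℝ → ℝ} (hg : Continuous g) {a b : ℝ} (ha : 0 < a)
    (hb : 0 < b) : ∫ x in a..b, g x⁻¹ / x ^ 2 = ∫ y in b⁻¹..a⁻¹, g y := by
  have hpos : ∀ x ∈ uIcc a b, 0 < x := fun x hx =>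
    lt_of_lt_of_le (lt_min ha hb) (by simpa using hx.1)
  have hsub := intervalIntegral.integral_comp_mul_deriv (g := g) (f := fun x => x⁻¹)
    (f' := fun x => -(x ^ 2)⁻¹) (fun x hx => hasDerivAt_inv (hpos x hx).ne')
    (ContinuousOn.neg (ContinuousOn.inv₀ (by fun_prop) fun x hx => pow_ne_zero 2 (hpos x hx).ne'))
    hg
  rw [intervalIntegral.integral_symm a⁻¹, ← hsub, ← intervalIntegral.integral_neg]
  simp only [Function.comp_apply, mul_neg, neg_neg, div_eq_mul_inv]

theorem integral_linear_interpolation {c d : ℝ} (hcd : c ≠ d) (p q : ℝ) :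
    ∫ y in c..d, ((y - c) / (d - c) * p + (1 - (y - c) / (d - c)) * q) = (d - c) * (p + q) / 2 := by
  have hdc : d - c ≠ 0 := sub_ne_zero.2 hcd.symm
  have haff : ∀ y, (y - c) / (d - c) * p + (1 - (y - c) / (d - c)) * q
      = (p - q) / (d - c) * y + (q - (p - q) / (d - c) * c) := fun y => by ring
  simp only [haff]
  rw [intervalIntegral.integral_add ((continuous_const_mul _).intervalIntegrable _ _)
      intervalIntegrable_const, intervalIntegral.integral_const_mul, integral_id,
    intervalIntegral.integral_const, smul_eq_mul]
  field_simp
  ring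

theorem stmt_9_general (m : ℝ) (hm : m ∈ Set.Ioc (0:ℝ) 1) (D : Set ℝ)
    (F : ℝ → Set ℝ)
    (hF : SVHarmMConvex m D F)
    (a b : ℝ) (ha : 0 < a) (hab : a < b) (haD : a ∈ D) (hbD : b / m ∈ D)
    (u v : ℝ) (hu : u ∈ F a) (hv : v ∈ F (b / m)) :
    ∃ f : ℝ → ℝ, MeasureTheory.IntegrableOn f (Set.Icc a b) ∧
      (∀ x ∈ Set.Icc a b, f x ∈ F x) ∧
      (a * b / (b - a)) * ∫ x in a..b, f x / x ^ 2 = (u + m * v) / 2 := by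
  have hb : 0 < b := ha.trans hab
  have hinv : b⁻¹ < a⁻¹ := inv_strictAnti₀ ha hab
  refine ⟨fun x => harmonicWeight a b x * u + (1 - harmonicWeight a b x) * (m * v), ?_, ?_, ?_⟩
  · refine ContinuousOn.integrableOn_Icc ?_
    unfold harmonicWeight
    fun_prop (disch := first
      | exact fun x hx => (ha.trans_le hx.1).ne'
      | exact (sub_pos.2 hinv).ne')
  · intro x hx
    have hmem := hF.smul_add_smul_mem hbD haD (harmonicWeight_mem_Icc ha hab hx) hu hv
    rw [harmonicWeight_harmonicMean hm.1.ne' ha.ne' hb.ne' hab.ne (ha.trans_le hx.1).ne'] at hmem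
    convert hmem using 1
    simp only [smul_eq_mul]
    ring
  · have hmean :
        ∫ x in a..b, (harmonicWeight a b x * u + (1 - harmonicWeight a b x) * (m * v)) / x ^ 2
          = (a⁻¹ - b⁻¹) * (u + m * v) / 2 :=
      (integral_comp_inv_div_sq (by fun_prop) ha hb).trans
        (integral_linear_interpolation hinv.ne u (m * v))
    have hba : b - a ≠ 0 := (sub_pos.2 hab).ne'
    rw [hmean]
    field_simp

theorem stmt_9 (m : ℝ) (hm : m ∈ Set.Ioc (0:ℝ) 1) (D : Set ℝ)
    (hDpos : ∀ x ∈ D, 0 < x) (hD : HarmMConvexSet m D)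
    (F : ℝ → Set ℝ) (hFne : ∀ x ∈ D, (F x).Nonempty)
    (hF : SVHarmMConvex m D F)
    (a b : ℝ) (ha : 0 < a) (hab : a < b) (haD : a ∈ D) (hbD : b / m ∈ D)
    (hIcc : Set.Icc a b ⊆ D)
    (u v : ℝ) (hu : u ∈ F a) (hv : v ∈ F (b / m)) :
    ∃ f : ℝ → ℝ, MeasureTheory.IntegrableOn f (Set.Icc a b) ∧
      (∀ x ∈ Set.Icc a b, f x ∈ F x) ∧
      (a * b / (b - a)) * ∫ x in a..b, f x / x ^ 2 = (u + m * v) / 2 :=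
  stmt_9_general m hm D F hF a b ha hab haD hbD u v hu hv
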